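/- Let H be a real inner product space and let p ≥ 2 be a real number. Then for all x, y ∈ H, ‖x+y‖^p − ‖x‖^p − p‖x‖^{p−2}⟨x,y⟩ ≤ (1/2)·p·(p−1)·((2^{p−2}+1)·‖x‖^{p−2}·‖y‖² + 2^{p−2}·‖y‖^p). -/

import Mathlib

/-!
Write `u = ‖x‖`, `v = ‖y‖`, `w = ⟪x, y⟫`. The left-hand side is
`(u² + 2w + v²)^(p/2) - u^p - p u^(p-2) w`, a convex function of `w` on `[-uv, uv]`, so it is
maximal in the collinear cases `w = ±uv`. Those are second-order Taylor bounds for `s ↦ s^p`,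
whose second derivative `p(p-1)s^(p-2)` is increasing on `[0, ∞)`; the factor `2^(p-2)` comes from
`(u + v)^(p-2) ≤ 2^(p-2)(u^(p-2) + v^(p-2))`, and the extra `+ 1` pays for the case `w = -uv`,
`u < v`, where `|u - v|^p ≤ v^p` and `u^(p-1) v ≤ u^(p-2) v²` are used instead.
-/

open Set
open scoped RealInnerProductSpace

theorem ConvexOn.add_mul_sub_le_of_hasDerivAt {S : Set ℝ} {f : ℝ → ℝ} {x y f' : ℝ}
    (hfc : ConvexOn ℝ S f) (hx : x ∈ S) (hy : y ∈ S) (hf : HasDerivAt f f' x) :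
    f x + f' * (y - x) ≤ f y := by
  rcases lt_trichotomy x y with hxy | rfl | hyx
  · have := hfc.le_slope_of_hasDerivAt hx hy hxy hf
    rw [slope_def_field, le_div_iff₀ (sub_pos.2 hxy)] at this
    linarith
  · simp
  · have := hfc.slope_le_of_hasDerivAt hy hx hyx hf
    rw [slope_def_field, div_le_iff₀ (sub_pos.2 hyx)] at this
    linarith

theorem le_add_mul_sub_add_sq_of_hasDerivAt2_le {D : Set ℝ} (hD : Convex ℝ D)
    {f f' f'' : ℝ → ℝ} {K a b : ℝ} (hf : ∀ x ∈ D, HasDerivAt f (f' x) x)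
    (hf' : ∀ x ∈ D, HasDerivAt f' (f'' x) x) (hK : ∀ x ∈ D, f'' x ≤ K)
    (ha : a ∈ D) (hb : b ∈ D) :
    f b ≤ f a + f' a * (b - a) + K / 2 * (b - a) ^ 2 := by
  have hg (x : ℝ) (hx : x ∈ D) : HasDerivAt (fun x ↦ K / 2 * x ^ 2 - f x) (K * x - f' x) x := by
    refine (((hasDerivAt_pow 2 x).const_mul (K / 2)).fun_sub (hf x hx)).congr_deriv ?_
    push_cast
    ring
  have hg' (x : ℝ) (hx : x ∈ D) : HasDerivAt (fun x ↦ K * x - f' x) (K - f'' x) x := by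
    simpa using ((hasDerivAt_id' x).const_mul K).fun_sub (hf' x hx)
  have hconv : ConvexOn ℝ D (fun x ↦ K / 2 * x ^ 2 - f x) :=
    convexOn_of_hasDerivWithinAt2_nonneg hD
      (fun x hx ↦ (hg x hx).continuousAt.continuousWithinAt)
      (fun x hx ↦ (hg x (interior_subset hx)).hasDerivWithinAt)
      (fun x hx ↦ (hg' x (interior_subset hx)).hasDerivWithinAt)
      (fun x hx ↦ sub_nonneg.2 (hK x (interior_subset hx)))
  have := hconv.add_mul_sub_le_of_hasDerivAt ha hb (hg a ha)
  linear_combination this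

theorem Real.add_rpow_le_two_rpow_mul_rpow_add_rpow {a b p : ℝ} (ha : 0 ≤ a) (hb : 0 ≤ b)
    (hp : 0 ≤ p) : (a + b) ^ p ≤ 2 ^ p * (a ^ p + b ^ p) := calc
  (a + b) ^ p ≤ (2 * max a b) ^ p := by
    rw [two_mul]; gcongr <;> simp
  _ = 2 ^ p * max (a ^ p) (b ^ p) := by
    rw [Real.mul_rpow zero_le_two (le_max_of_le_left ha), Real.rpow_max ha hb hp]
  _ ≤ 2 ^ p * (a ^ p + b ^ p) := by
    gcongr
    exact max_le_add_of_nonneg (by positivity) (by positivity)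

theorem Real.rpow_le_add_mul_sub_add_sq {p a b M : ℝ} (hp : 2 ≤ p) (ha : a ∈ Icc 0 M)
    (hb : b ∈ Icc 0 M) :
    b ^ p ≤ a ^ p + p * a ^ (p - 1) * (b - a) + p * (p - 1) * M ^ (p - 2) / 2 * (b - a) ^ 2 := by
  refine le_add_mul_sub_add_sq_of_hasDerivAt2_le (convex_Icc 0 M)
    (f' := fun x ↦ p * x ^ (p - 1)) (f'' := fun x ↦ p * (p - 1) * x ^ (p - 2))
    (fun x _ ↦ Real.hasDerivAt_rpow_const (.inr (by linarith)))
    (fun x _ ↦ ?_) (fun x hx ↦ ?_) ha hb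
  · refine ((Real.hasDerivAt_rpow_const (.inr (by linarith))).const_mul p).congr_deriv ?_
    rw [sub_sub, one_add_one_eq_two, mul_assoc]
  · have : 0 ≤ p * (p - 1) := by nlinarith
    gcongr
    all_goals linarith [hx.1, hx.2]

theorem Real.sq_rpow_div_two (a p : ℝ) : (a ^ 2) ^ (p / 2) = |a| ^ p := by
  rw [← sq_abs, ← Real.rpow_natCast_mul (abs_nonneg a)]
  ring_nf

theorem Real.rpow_sub_two_mul_sq {v p : ℝ} (hv : 0 ≤ v) (hp : p ≠ 0) :
    v ^ (p - 2) * v ^ 2 = v ^ p := by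
  rw [← Real.rpow_two, ← Real.rpow_add' hv (by simpa using hp), sub_add_cancel]

theorem Real.rpow_sub_two_mul_self {u p : ℝ} (hu : 0 ≤ u) (hp : p ≠ 1) :
    u ^ (p - 2) * u = u ^ (p - 1) := by
  rw [← Real.rpow_add_one' hu (by contrapose! hp; linarith)]
  ring_nf

noncomputable def jumpBound (p u v : ℝ) : ℝ :=
  (1 / 2) * p * (p - 1) * ((2 ^ (p - 2) + 1) * u ^ (p - 2) * v ^ 2 + 2 ^ (p - 2) * v ^ p)

section JumpBound

variable {p u v : ℝ}

lemma add_rpow_sub_le_jumpBound (hp : 2 ≤ p) (hu : 0 ≤ u) (hv : 0 ≤ v) :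
    (u + v) ^ p - u ^ p - p * u ^ (p - 1) * v ≤ jumpBound p u v := by
  have hc : 0 ≤ p * (p - 1) / 2 := by nlinarith
  have taylor := Real.rpow_le_add_mul_sub_add_sq (a := u) (b := u + v) (M := u + v) hp
    ⟨hu, by linarith⟩ ⟨by linarith, le_rfl⟩
  have doubling := Real.add_rpow_le_two_rpow_mul_rpow_add_rpow hu hv (by linarith : 0 ≤ p - 2)
  have : 0 ≤ p * (p - 1) / 2 * (u ^ (p - 2) * v ^ 2) := by positivity
  calc (u + v) ^ p - u ^ p - p * u ^ (p - 1) * v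
      ≤ p * (p - 1) / 2 * (u + v) ^ (p - 2) * v ^ 2 := by
        rw [add_sub_cancel_left] at taylor; linarith
    _ ≤ p * (p - 1) / 2 * (2 ^ (p - 2) * (u ^ (p - 2) + v ^ (p - 2))) * v ^ 2 := by gcongr
    _ ≤ jumpBound p u v := by
        rw [jumpBound, ← Real.rpow_sub_two_mul_sq (p := p) hv (by linarith)]; linarith

lemma abs_sub_rpow_add_le_jumpBound (hp : 2 ≤ p) (hu : 0 ≤ u) (hv : 0 ≤ v) :
    |u - v| ^ p - u ^ p + p * u ^ (p - 1) * v ≤ jumpBound p u v := by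
  have hC : 1 ≤ 1 / 2 * p * (p - 1) := by nlinarith
  have hT : 1 ≤ (2 : ℝ) ^ (p - 2) := Real.one_le_rpow one_le_two (by linarith)
  have hA : 0 ≤ u ^ (p - 2) * v ^ 2 := by positivity
  have hB : 0 ≤ v ^ p := by positivity
  rcases le_or_gt v u with hvu | huv
  · have taylor := Real.rpow_le_add_mul_sub_add_sq (a := u) (b := u - v) (M := u) hp
      ⟨hu, le_rfl⟩ ⟨by linarith, by linarith⟩
    rw [abs_of_nonneg (by linarith)]
    have : 0 ≤ 1 / 2 * p * (p - 1) * (2 ^ (p - 2) * (u ^ (p - 2) * v ^ 2 + v ^ p)) := by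
      positivity
    rw [jumpBound]
    linarith
  · have hpow : |u - v| ^ p ≤ v ^ p := by
      rw [abs_of_neg (by linarith)]
      exact Real.rpow_le_rpow (by linarith) (by linarith) (by linarith)
    have hlin : p * u ^ (p - 1) * v ≤ p * (u ^ (p - 2) * v ^ 2) := by
      rw [← Real.rpow_sub_two_mul_self hu (by linarith), mul_assoc, mul_assoc, sq]
      gcongr
    have hBv : v ^ p ≤ 1 / 2 * p * (p - 1) * 2 ^ (p - 2) * v ^ p :=
      le_mul_of_one_le_left hB (one_le_mul_of_one_le_of_one_le hC hT)
    have hAu : p * (u ^ (p - 2) * v ^ 2) ≤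
        1 / 2 * p * (p - 1) * (2 ^ (p - 2) + 1) * (u ^ (p - 2) * v ^ 2) :=
      mul_le_mul_of_nonneg_right (by nlinarith) hA
    rw [jumpBound]
    linarith [Real.rpow_nonneg hu p]

lemma convexOn_rpow_sq_add_sub (hp : 2 ≤ p) :
    ConvexOn ℝ (Icc (-(u * v)) (u * v))
      (fun w ↦ (u ^ 2 + 2 * w + v ^ 2) ^ (p / 2) - u ^ p - p * u ^ (p - 2) * w) := by
  have hnonneg {w : ℝ} (hw : w ∈ Icc (-(u * v)) (u * v)) : u ^ 2 + 2 * w + v ^ 2 ∈ Ici 0 := by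
    have := hw.1
    simp only [mem_Ici]
    nlinarith [sq_nonneg (u - v)]
  refine ⟨convex_Icc _ _, fun w₁ hw₁ w₂ hw₂ a b ha hb hab ↦ ?_⟩
  have h := (convexOn_rpow (by linarith : 1 ≤ p / 2)).2 (hnonneg hw₁) (hnonneg hw₂) ha hb hab
  simp only [smul_eq_mul] at h ⊢
  have e : a * (u ^ 2 + 2 * w₁ + v ^ 2) + b * (u ^ 2 + 2 * w₂ + v ^ 2) =
      u ^ 2 + 2 * (a * w₁ + b * w₂) + v ^ 2 := by
    linear_combination (u ^ 2 + v ^ 2) * hab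
  rw [e] at h
  linear_combination h + u ^ p * hab

lemma rpow_sq_add_sub_le_jumpBound {w : ℝ} (hp : 2 ≤ p) (hu : 0 ≤ u) (hv : 0 ≤ v)
    (hw : |w| ≤ u * v) :
    (u ^ 2 + 2 * w + v ^ 2) ^ (p / 2) - u ^ p - p * u ^ (p - 2) * w ≤ jumpBound p u v := by
  have huv : 0 ≤ u * v := by positivity
  have hmax := (convexOn_rpow_sq_add_sub (u := u) (v := v) hp).le_max_of_mem_Icc
    (left_mem_Icc.2 (by linarith)) (right_mem_Icc.2 (by linarith)) (abs_le.1 hw)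
  have hpow : p * u ^ (p - 2) * (u * v) = p * u ^ (p - 1) * v := by
    rw [← Real.rpow_sub_two_mul_self hu (by linarith)]; ring
  refine hmax.trans (max_le ?_ ?_)
  · rw [show u ^ 2 + 2 * -(u * v) + v ^ 2 = (u - v) ^ 2 by ring, Real.sq_rpow_div_two,
      mul_neg, hpow, sub_neg_eq_add]
    exact abs_sub_rpow_add_le_jumpBound hp hu hv
  · rw [show u ^ 2 + 2 * (u * v) + v ^ 2 = (u + v) ^ 2 by ring, Real.sq_rpow_div_two,
      abs_of_nonneg (by positivity), hpow]
    exact add_rpow_sub_le_jumpBound hp hu hv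

end JumpBound

/-- Pointwise bound for the jump term `D_s` in the proof of Theorem 3.8:
`‖x+y‖^p − ‖x‖^p − p‖x‖^{p−2}⟨x,y⟩
  ≤ (1/2)p(p−1)((2^{p−2}+1)‖x‖^{p−2}‖y‖² + 2^{p−2}‖y‖^p)`. -/
theorem jump_term_pointwise_bound
    {H : Type*} [NormedAddCommGroup H] [InnerProductSpace ℝ H]
    (p : ℝ) (hp : 2 ≤ p) (x y : H) :
    ‖x + y‖ ^ p - ‖x‖ ^ p - p * ‖x‖ ^ (p - 2) * ⟪x, y⟫ ≤
      (1 / 2) * p * (p - 1) *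
        (((2 : ℝ) ^ (p - 2) + 1) * ‖x‖ ^ (p - 2) * ‖y‖ ^ (2 : ℕ)
          + (2 : ℝ) ^ (p - 2) * ‖y‖ ^ p) := by
  rw [← abs_norm (x + y), ← Real.sq_rpow_div_two, norm_add_sq_real]
  exact rpow_sq_add_sub_le_jumpBound hp (norm_nonneg x) (norm_nonneg y)
    (abs_real_inner_le_norm x y)
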